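/- arXiv:2509.11309 — 4 statements merged into one kernel-verified Lean document; each statement's English description precedes it below -/
import Mathlib

section
/- For every T > 0 there exists a constant C_T such that for all x ∈ ℝ² with x ≠ 0, ∫₀^T G_{√s}(x) ds ≤ C_T (1 + |log |x||). -/
open MeasureTheory Real

/-- The centred Gaussian density on `ℝ²` with standard deviation `σ`:
`G_σ(x) = (2πσ²)⁻¹ exp(−|x|²/(2σ²))`. -/
noncomputable def G (σ : ℝ) (x : EuclideanSpace ℝ (Fin 2)) : ℝ :=
  (2 * π * σ ^ 2)⁻¹ * Real.exp (-‖x‖ ^ 2 / (2 * σ ^ 2))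

/-!
The integrand `s ↦ G_{√s}(x)` is bounded by `(π|x|²)⁻¹` for all times and by `(2πs)⁻¹` for
large times. Using the first bound on `(0, min(|x|², T)]` and the second on the rest gives
`∫₀^T G_{√s}(x) ds ≤ π⁻¹ + (2π)⁻¹ log⁺(T / |x|²)`, which is `O(1 + |log |x||)`.
-/

section

variable {s a b : ℝ} {x : EuclideanSpace ℝ (Fin 2)}

lemma G_sqrt_eq (hs : 0 ≤ s) :
    G (√s) x = (2 * π * s)⁻¹ * exp (-‖x‖ ^ 2 / (2 * s)) := by
  rw [G, sq_sqrt hs]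

lemma G_sqrt_le_inv_two_pi_mul (hs : 0 ≤ s) : G (√s) x ≤ (2 * π * s)⁻¹ := by
  rw [G_sqrt_eq hs]
  refine mul_le_of_le_one_right (by positivity) (exp_le_one_iff.2 ?_)
  exact div_nonpos_of_nonpos_of_nonneg (by nlinarith [sq_nonneg ‖x‖]) (by positivity)

/-- With `u = ‖x‖² / (2s)` one has `G_{√s}(x) = (π‖x‖²)⁻¹ u e^{-u}`, and `u e^{-u} ≤ e^{-1}`. -/
lemma G_sqrt_le_inv_pi_mul_norm_sq (hx : x ≠ 0) (hs : 0 < s) :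
    G (√s) x ≤ (π * ‖x‖ ^ 2)⁻¹ := by
  have hr : 0 < ‖x‖ := norm_pos_iff.2 hx
  have hG : G (√s) x =
      (π * ‖x‖ ^ 2)⁻¹ * (‖x‖ ^ 2 / (2 * s) * exp (-(‖x‖ ^ 2 / (2 * s)))) := by
    rw [G_sqrt_eq hs.le, neg_div]
    field_simp
  rw [hG]
  refine mul_le_of_le_one_right (by positivity) ?_
  exact (mul_exp_neg_le_exp_neg_one _).trans (exp_le_one_iff.2 (by norm_num))

lemma integrableOn_G_sqrt_Ioc (hx : x ≠ 0) (ha : 0 ≤ a) (b : ℝ) :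
    IntegrableOn (fun s => G (√s) x) (Set.Ioc a b) := by
  have hmeas : Measurable fun s : ℝ => G (√s) x := by
    unfold G
    fun_prop
  refine Measure.integrableOn_of_bounded measure_Ioc_lt_top.ne hmeas.aestronglyMeasurable
    (M := (π * ‖x‖ ^ 2)⁻¹) (ae_restrict_of_forall_mem measurableSet_Ioc fun s hs => ?_)
  have hs0 : 0 < s := ha.trans_lt hs.1
  rw [Real.norm_of_nonneg ((G_sqrt_eq hs0.le).symm ▸ by positivity)]
  exact G_sqrt_le_inv_pi_mul_norm_sq hx hs0

lemma setIntegral_G_sqrt_Ioc_zero_le (hx : x ≠ 0) (ha : 0 ≤ a) :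
    ∫ s in Set.Ioc 0 a, G (√s) x ≤ a * (π * ‖x‖ ^ 2)⁻¹ := by
  calc ∫ s in Set.Ioc 0 a, G (√s) x ≤ ∫ _ in Set.Ioc 0 a, (π * ‖x‖ ^ 2)⁻¹ :=
        setIntegral_mono_on (integrableOn_G_sqrt_Ioc hx le_rfl a)
          (integrableOn_const measure_Ioc_lt_top.ne) measurableSet_Ioc
          fun s hs => G_sqrt_le_inv_pi_mul_norm_sq hx hs.1
    _ = a * (π * ‖x‖ ^ 2)⁻¹ := by
        rw [setIntegral_const, measureReal_def, Real.volume_Ioc, sub_zero,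
          ENNReal.toReal_ofReal ha, smul_eq_mul]

lemma setIntegral_G_sqrt_Ioc_le_log (hx : x ≠ 0) (ha : 0 < a) (hab : a ≤ b) :
    ∫ s in Set.Ioc a b, G (√s) x ≤ (2 * π)⁻¹ * log (b / a) := by
  rw [← intervalIntegral.integral_of_le hab, ← integral_inv_of_pos ha (ha.trans_le hab),
    ← intervalIntegral.integral_const_mul]
  refine intervalIntegral.integral_mono_on hab
    ((intervalIntegrable_iff_integrableOn_Ioc_of_le hab).2 (integrableOn_G_sqrt_Ioc hx ha.le b))
    ((intervalIntegral.intervalIntegrable_inv (fun s hs => ?_) continuousOn_id).const_mul _)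
    fun s hs => ?_
  · rw [Set.uIcc_of_le hab] at hs
    exact (ha.trans_le hs.1).ne'
  · rw [← mul_inv]
    exact G_sqrt_le_inv_two_pi_mul (ha.le.trans hs.1)

lemma log_div_min_sq_le {r T : ℝ} (hr : 0 < r) (hT : 0 < T) :
    log (T / min (r ^ 2) T) ≤ |log T| + 2 * |log r| := by
  rcases min_choice (r ^ 2) T with h | h <;> rw [h]
  · rw [log_div hT.ne' (by positivity), log_pow]
    push_cast
    linarith [le_abs_self (log T), neg_abs_le (log r)]
  · rw [div_self hT.ne', log_one]
    positivity

lemma setIntegral_G_sqrt_Ioc_zero_le_log (hx : x ≠ 0) {T : ℝ} (hT : 0 < T) :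
    ∫ s in Set.Ioc 0 T, G (√s) x ≤ π⁻¹ + (2 * π)⁻¹ * (|log T| + 2 * |log ‖x‖|) := by
  have hr : 0 < ‖x‖ := norm_pos_iff.2 hx
  set a := min (‖x‖ ^ 2) T
  have ha : 0 < a := lt_min (by positivity) hT
  have hnear : a * (π * ‖x‖ ^ 2)⁻¹ ≤ π⁻¹ :=
    calc a * (π * ‖x‖ ^ 2)⁻¹ ≤ ‖x‖ ^ 2 * (π * ‖x‖ ^ 2)⁻¹ := by
          gcongr
          exact min_le_left _ _
      _ = π⁻¹ := by field_simp
  rw [← Set.Ioc_union_Ioc_eq_Ioc ha.le (min_le_right _ _),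
    setIntegral_union (Set.Ioc_disjoint_Ioc_of_le le_rfl) measurableSet_Ioc
      (integrableOn_G_sqrt_Ioc hx le_rfl a) (integrableOn_G_sqrt_Ioc hx ha.le T)]
  gcongr
  · exact (setIntegral_G_sqrt_Ioc_zero_le hx ha.le).trans hnear
  · exact (setIntegral_G_sqrt_Ioc_le_log hx ha (min_le_right _ _)).trans
      (by gcongr; exact log_div_min_sq_le hr hT)

end

/-- For every `T > 0` there exists a constant `C_T` such that for all nonzero `x ∈ ℝ²`,
`∫₀^T G_{√s}(x) ds ≤ C_T (1 + |log |x||)`. -/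
theorem stmt1 (T : ℝ) (hT : 0 < T) :
    ∃ C : ℝ, ∀ x : EuclideanSpace ℝ (Fin 2), x ≠ 0 →
      ∫ s in Set.Ioc (0 : ℝ) T, G (Real.sqrt s) x ≤ C * (1 + |Real.log ‖x‖|) := by
  refine ⟨π⁻¹ + (2 * π)⁻¹ * |log T|, fun x hx => ?_⟩
  refine (setIntegral_G_sqrt_Ioc_zero_le_log hx hT).trans ?_
  have hlog : 0 ≤ π⁻¹ * (|log T| * |log ‖x‖|) := by positivity
  rw [mul_inv]
  nlinarith
end

section
/- Let n ≥ 1 and let (α_{ij})_{1 ≤ i ≠ j ≤ n} be nonnegative integers. There exists a constant C, depending only on n and the α_{ij}, such that for every λ ∈ (0, e^{-1}], ⨍_{B_λ} ⋯ ⨍_{B_λ} ∏_{i ≠ j} (1 + |log |x_i − x_j||)^{2α_{ij}} dx₁ ⋯ dxₙ ≤ C · |log λ|^{2 Σ_{i≠j} α_{ij}}. In particular all these integrals are finite. -/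
/-!
Since `1 + |log (s t)| ≤ (1 + |log s|) (1 + |log t|)`, the weight
`W(x) = ∏_{i ≠ j} (1 + |log ‖x_i - x_j‖|)^{k_ij}` (`logWeight k` below) satisfies
`W(c x) ≤ (1 + |log c|)^{Σ k} W(x)`. Rescaling `B_λⁿ` to `B_1ⁿ` therefore bounds the average
of `W` over `B_λⁿ` by `(1 + |log λ|)^{Σ k} ≤ (2 |log λ|)^{Σ k}` times its average over `B_1ⁿ`,
and it remains to see that `W` is integrable on products of balls; by the same rescaling,
`B_{1/2}ⁿ` suffices. There every difference `x_i - x_j` lies in the unit ball, where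
`(1 + |log ‖z‖|)^M = O(‖z‖^{-ε})` is integrable, so integrating first in `x_i` shows that every
power of every factor of `W` is integrable; and `W` is dominated by `1 + Σ (factor)^N`, `N` the
number of factors.
-/

open MeasureTheory Real
open Metric
open scoped ENNReal Pointwise

namespace Real

theorem one_add_abs_log_mul_le (s t : ℝ) :
    1 + |log (s * t)| ≤ (1 + |log s|) * (1 + |log t|) := by
  rcases eq_or_ne s 0 with rfl | hs
  · simp
  rcases eq_or_ne t 0 with rfl | ht
  · simp
  rw [log_mul hs ht]
  nlinarith [abs_add_le (log s) (log t), abs_nonneg (log s), abs_nonneg (log t)]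

theorem one_add_abs_log_le_mul_rpow_neg {t ε : ℝ} (ht₀ : 0 < t) (ht₁ : t ≤ 1) (hε : 0 < ε) :
    1 + |log t| ≤ (1 + ε⁻¹) * t ^ (-ε) := by
  have hone : 1 ≤ t ^ (-ε) := one_le_rpow_of_pos_of_le_one_of_nonpos ht₀ ht₁ (by linarith)
  have hlog : |log t| * t ^ ε < ε⁻¹ := by
    simpa [abs_mul, abs_of_pos (rpow_pos_of_pos ht₀ ε)] using
      abs_log_mul_self_rpow_lt t ε ht₀ ht₁ hε
  have hcancel : t ^ ε * t ^ (-ε) = 1 := by rw [← rpow_add ht₀]; simp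
  calc 1 + |log t| = 1 + |log t| * t ^ ε * t ^ (-ε) := by rw [mul_assoc, hcancel, mul_one]
    _ ≤ t ^ (-ε) + ε⁻¹ * t ^ (-ε) := by gcongr
    _ = (1 + ε⁻¹) * t ^ (-ε) := by ring

end Real

theorem integrableOn_ball_one_add_abs_log_norm_pow {E : Type*} [NormedAddCommGroup E]
    [NormedSpace ℝ E] [FiniteDimensional ℝ E] [MeasurableSpace E] [BorelSpace E]
    (μ : Measure E) [μ.IsAddHaarMeasure] (hd : 1 ≤ Module.finrank ℝ E) (K : ℕ) :
    IntegrableOn (fun z : E => (1 + |log ‖z‖|) ^ K) (ball 0 1) μ := by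
  have : Nontrivial E := Module.nontrivial_of_finrank_pos (R := ℝ) (by omega)
  set ε : ℝ := ((K : ℝ) + 1)⁻¹ with hε
  have hε₀ : 0 < ε := by positivity
  have hεK : ε * K < Module.finrank ℝ E := by
    calc ε * K < 1 := by rw [hε, inv_mul_lt_one₀ (by positivity)]; linarith
      _ ≤ Module.finrank ℝ E := by exact_mod_cast hd
  refine integrableOn_ball_of_norm_le_rpow hd (C := (1 + ε⁻¹) ^ K) hεK ?_
    ((measurable_log.comp measurable_norm).abs.const_add 1 |>.pow_const K).aestronglyMeasurable
  have hne : ∀ᵐ z ∂μ, z ∈ ({0} : Set E)ᶜ := compl_mem_ae_iff.mpr (measure_singleton 0)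
  filter_upwards [ae_restrict_mem measurableSet_ball, ae_restrict_of_ae hne] with z hz hz₀
  have ht₀ : 0 < ‖z‖ := norm_pos_iff.mpr hz₀
  have ht₁ : ‖z‖ ≤ 1 := (mem_ball_zero_iff.mp hz).le
  rw [norm_of_nonneg (by positivity), ← neg_mul, rpow_mul ht₀.le, rpow_natCast, ← mul_pow]
  exact pow_le_pow_left₀ (by positivity) (one_add_abs_log_le_mul_rpow_neg ht₀ ht₁ hε₀) K

section Pairs

variable {G : Type*} [MeasurableSpace G] [AddGroup G] [MeasurableAdd₂ G]
  (μ : Measure G) [μ.IsAddRightInvariant]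

theorem setLIntegral_comp_sub_le (g : G → ℝ≥0∞) {s t : Set G} {c : G}
    (hst : ∀ a ∈ s, a - c ∈ t) :
    ∫⁻ a in s, g (a - c) ∂μ ≤ ∫⁻ z in t, g z ∂μ :=
  calc ∫⁻ a in s, g (a - c) ∂μ ≤ ∫⁻ a in (· - c) ⁻¹' t, g (a - c) ∂μ :=
        lintegral_mono_set hst
    _ = ∫⁻ z in t, g z ∂μ :=
      (measurePreserving_sub_right μ c).setLIntegral_comp_preimage_emb
        (measurableEmbedding_subRight c) g t

variable [MeasurableNeg G] [SigmaFinite μ]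

theorem setLIntegral_pi_comp_sub_le {n : ℕ} {i j : Fin n} (hij : i ≠ j) {g : G → ℝ≥0∞}
    (hg : Measurable g) {s t : Set G} (hs : MeasurableSet s)
    (hst : ∀ a ∈ s, ∀ b ∈ s, a - b ∈ t) :
    ∫⁻ y in Set.univ.pi (fun _ => s), g (y i - y j) ∂(Measure.pi fun _ => μ)
      ≤ μ s ^ (n - 1) * ∫⁻ z in t, g z ∂μ := by
  obtain ⟨m, rfl⟩ : ∃ m, n = m + 1 := Nat.exists_eq_add_one_of_ne_zero (Fin.pos i).ne'
  obtain ⟨j, rfl⟩ := Fin.exists_succAbove_eq hij.symm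
  set e := MeasurableEquiv.piFinSuccAbove (fun _ : Fin (m + 1) => G) i
  have hpre : Set.univ.pi (fun _ => s) = e ⁻¹' (s ×ˢ Set.univ.pi fun _ => s) := by
    ext y
    simp [e, Fin.forall_iff_succAbove i, Fin.removeNth]
  calc ∫⁻ y in Set.univ.pi (fun _ => s), g (y i - y (i.succAbove j)) ∂(Measure.pi fun _ => μ)
      = ∫⁻ p in s ×ˢ Set.univ.pi (fun _ => s), g (p.1 - p.2 j)
          ∂(μ.prod (Measure.pi fun _ => μ)) := by
        rw [hpre]
        exact (measurePreserving_piFinSuccAbove (fun _ => μ) i).setLIntegral_comp_preimage_emb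
          e.measurableEmbedding (fun p => g (p.1 - p.2 j)) _
    _ = ∫⁻ z in Set.univ.pi (fun _ => s), ∫⁻ a in s, g (a - z j) ∂μ
          ∂(Measure.pi fun _ => μ) := by
        rw [← Measure.prod_restrict, lintegral_prod_symm' _ (by fun_prop)]
    _ ≤ ∫⁻ _ in Set.univ.pi (fun _ => s), ∫⁻ z in t, g z ∂μ ∂(Measure.pi fun _ => μ) :=
        setLIntegral_mono' (MeasurableSet.univ_pi fun _ => hs) fun z hz =>
          setLIntegral_comp_sub_le μ g fun a ha => hst a ha _ (hz j trivial)
    _ = μ s ^ m * ∫⁻ z in t, g z ∂μ := by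
        rw [setLIntegral_const, Measure.pi_pi, Finset.prod_const, Finset.card_univ,
          Fintype.card_fin, mul_comm]

theorem integrableOn_pi_comp_sub {n : ℕ} {i j : Fin n} (hij : i ≠ j) {g : G → ℝ}
    (hg : Measurable g) {s t : Set G} (hs : MeasurableSet s) (hμs : μ s ≠ ∞)
    (hst : ∀ a ∈ s, ∀ b ∈ s, a - b ∈ t) (hgt : IntegrableOn g t μ) :
    IntegrableOn (fun y : Fin n → G => g (y i - y j)) (Set.univ.pi fun _ => s)
      (Measure.pi fun _ => μ) := by
  refine ⟨(hg.comp ((measurable_pi_apply i).sub (measurable_pi_apply j))).aestronglyMeasurable,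
    ?_⟩
  calc ∫⁻ y in Set.univ.pi (fun _ => s), ‖g (y i - y j)‖ₑ ∂(Measure.pi fun _ => μ)
      ≤ μ s ^ (n - 1) * ∫⁻ z in t, ‖g z‖ₑ ∂μ :=
        setLIntegral_pi_comp_sub_le μ hij hg.enorm hs hst
    _ < ∞ := ENNReal.mul_lt_top (ENNReal.pow_lt_top hμs.lt_top) hgt.2

end Pairs

theorem Finset.prod_le_one_add_sum_pow_card {ι : Type*} {s : Finset ι} {a : ι → ℝ}
    (ha : ∀ i ∈ s, 0 ≤ a i) : ∏ i ∈ s, a i ≤ 1 + ∑ i ∈ s, a i ^ s.card := by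
  rcases s.eq_empty_or_nonempty with rfl | hs
  · simp
  obtain ⟨i₀, hi₀, hmax⟩ := s.exists_max_image a hs
  calc ∏ i ∈ s, a i ≤ ∏ _i ∈ s, a i₀ := Finset.prod_le_prod ha hmax
    _ = a i₀ ^ s.card := Finset.prod_const _
    _ ≤ ∑ i ∈ s, a i ^ s.card :=
        Finset.single_le_sum (fun i hi => pow_nonneg (ha i hi) _) hi₀
    _ ≤ 1 + ∑ i ∈ s, a i ^ s.card := le_add_of_nonneg_left zero_le_one

section LogWeight

variable {E : Type*} {n : ℕ}

noncomputable def logWeight [Norm E] [Sub E] (k : Fin n → Fin n → ℕ) (x : Fin n → E) : ℝ :=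
  ∏ i, ∏ j, if i = j then 1 else (1 + |log ‖x i - x j‖|) ^ k i j

theorem logWeight_factor_nonneg [Norm E] [Sub E] (k : Fin n → Fin n → ℕ) (x : Fin n → E)
    (i j : Fin n) :
    0 ≤ if i = j then (1 : ℝ) else (1 + |log ‖x i - x j‖|) ^ k i j := by
  split_ifs <;> positivity

theorem logWeight_nonneg [Norm E] [Sub E] (k : Fin n → Fin n → ℕ) (x : Fin n → E) :
    0 ≤ logWeight k x :=
  Finset.prod_nonneg fun i _ => Finset.prod_nonneg fun j _ => logWeight_factor_nonneg k x i j

theorem logWeight_smul_le [SeminormedAddCommGroup E] [NormedSpace ℝ E] (k : Fin n → Fin n → ℕ)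
    (c : ℝ) (x : Fin n → E) :
    logWeight k (c • x) ≤
      (1 + |log c|) ^ (∑ i, ∑ j, if i = j then 0 else k i j) * logWeight k x := by
  simp only [logWeight, ← Finset.prod_pow_eq_pow_sum, ← Finset.prod_mul_distrib]
  refine Finset.prod_le_prod (fun i _ => Finset.prod_nonneg fun j _ =>
    logWeight_factor_nonneg k _ i j) fun i _ => Finset.prod_le_prod (fun j _ =>
    logWeight_factor_nonneg k _ i j) fun j _ => ?_
  split_ifs
  · simp
  · rw [← mul_pow, Pi.smul_apply, Pi.smul_apply, ← smul_sub, norm_smul, norm_eq_abs,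
      ← log_abs c]
    exact pow_le_pow_left₀ (by positivity) (one_add_abs_log_mul_le _ _) _

variable [NormedAddCommGroup E] [NormedSpace ℝ E] [FiniteDimensional ℝ E] [MeasurableSpace E]
  [BorelSpace E]

theorem measurable_logWeight (k : Fin n → Fin n → ℕ) : Measurable (logWeight (E := E) k) := by
  refine Finset.measurable_prod _ fun i _ => Finset.measurable_prod _ fun j _ => ?_
  split_ifs
  · exact measurable_const
  · exact (measurable_log.comp ((measurable_pi_apply i).sub (measurable_pi_apply j)).norm).abs
      |>.const_add 1 |>.pow_const _

theorem integrableOn_logWeight_comp_smul {μ : Measure (Fin n → E)} {s : Set (Fin n → E)}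
    {k : Fin n → Fin n → ℕ} (hk : IntegrableOn (logWeight k) s μ) (c : ℝ) :
    IntegrableOn (fun y => logWeight k (c • y)) s μ :=
  (hk.const_mul _).mono'
    ((measurable_logWeight k).comp (measurable_const_smul c)).aestronglyMeasurable
    (ae_of_all _ fun y =>
      (norm_of_nonneg (logWeight_nonneg k _)).trans_le (logWeight_smul_le k c y))

theorem integrableOn_logWeight_pi_ball_half (μ : Measure E) [μ.IsAddHaarMeasure]
    (hd : 1 ≤ Module.finrank ℝ E) (k : Fin n → Fin n → ℕ) :
    IntegrableOn (logWeight k) (Set.univ.pi fun _ => ball (0 : E) (1 / 2))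
      (Measure.pi fun _ => μ) := by
  set S := Set.univ.pi fun _ : Fin n => ball (0 : E) (1 / 2)
  set N := (Finset.univ : Finset (Fin n × Fin n)).card
  set f : Fin n × Fin n → (Fin n → E) → ℝ := fun p x =>
    if p.1 = p.2 then 1 else (1 + |log ‖x p.1 - x p.2‖|) ^ k p.1 p.2
  have hS : (Measure.pi fun _ => μ) S ≠ ∞ := by
    rw [Measure.pi_pi]
    exact ENNReal.prod_ne_top fun _ _ => measure_ball_lt_top.ne
  have hf : ∀ p, IntegrableOn (fun x => f p x ^ N) S (Measure.pi fun _ => μ) := by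
    rintro ⟨i, j⟩
    by_cases hij : i = j
    · simpa [f, hij] using integrableOn_const (C := (1 : ℝ)) hS
    · simp only [f, hij, if_false, ← pow_mul]
      refine integrableOn_pi_comp_sub μ hij ?_ measurableSet_ball measure_ball_lt_top.ne
        (t := ball 0 1) (fun a ha b hb => ?_)
        (integrableOn_ball_one_add_abs_log_norm_pow μ hd _)
      · exact (measurable_log.comp measurable_norm).abs.const_add 1 |>.pow_const _
      · rw [mem_ball_zero_iff] at ha hb ⊢
        calc ‖a - b‖ ≤ ‖a‖ + ‖b‖ := norm_sub_le a b
          _ < 1 := by linarith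
  have hdom : IntegrableOn (fun x => 1 + ∑ p, f p x ^ N) S (Measure.pi fun _ => μ) :=
    (integrableOn_const (C := (1 : ℝ)) hS).add (integrable_finsetSum Finset.univ fun p _ => hf p)
  refine hdom.mono' (measurable_logWeight k).aestronglyMeasurable (ae_of_all _ fun x => ?_)
  rw [norm_of_nonneg (logWeight_nonneg k x), logWeight, ← Fintype.prod_prod_type']
  exact Finset.prod_le_one_add_sum_pow_card fun p _ => logWeight_factor_nonneg k x p.1 p.2

end LogWeight

section Scaling

variable {E : Type*} [NormedAddCommGroup E] [NormedSpace ℝ E] {n : ℕ}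

theorem pi_ball_zero_mul_eq_smul {c r : ℝ} (hc : 0 < c) (hr : 0 < r) :
    (Set.univ.pi fun _ : Fin n => ball (0 : E) (c * r)) =
      c • Set.univ.pi fun _ : Fin n => ball (0 : E) r := by
  have hball (ρ : ℝ) (hρ : 0 < ρ) :
      ball (0 : Fin n → E) ρ = Set.univ.pi fun _ => ball 0 ρ :=
    ball_pi 0 hρ
  rw [← hball _ hr, ← hball _ (mul_pos hc hr), _root_.smul_ball hc.ne', smul_zero,
    norm_of_nonneg hc.le]

variable [FiniteDimensional ℝ E] [MeasureSpace E] [BorelSpace E]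
  [(volume : Measure E).IsAddHaarMeasure]

theorem integrableOn_pi_ball_mul_iff {f : (Fin n → E) → ℝ} {c r : ℝ} (hc : 0 < c)
    (hr : 0 < r) :
    IntegrableOn f (Set.univ.pi fun _ => ball (0 : E) (c * r)) ↔
      IntegrableOn (fun y => f (c • y)) (Set.univ.pi fun _ => ball (0 : E) r) := by
  have hmeas (ρ : ℝ) : MeasurableSet (Set.univ.pi fun _ : Fin n => ball (0 : E) ρ) :=
    MeasurableSet.univ_pi fun _ => measurableSet_ball
  rw [← integrable_indicator_iff (hmeas _), ← integrable_indicator_iff (hmeas _),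
    ← integrable_comp_smul_iff volume _ hc.ne', pi_ball_zero_mul_eq_smul hc hr]
  congr! 1
  ext y
  by_cases hy : y ∈ Set.univ.pi fun _ : Fin n => ball (0 : E) r
  · rw [Set.indicator_of_mem (Set.smul_mem_smul_set hy), Set.indicator_of_mem hy]
  · rw [Set.indicator_of_notMem ((Set.smul_mem_smul_set_iff₀ hc.ne' _ _).not.mpr hy),
      Set.indicator_of_notMem hy]

theorem pi_ball_average_mul (f : (Fin n → E) → ℝ) {c r : ℝ} (hc : 0 < c) (hr : 0 < r) :
    ((volume (ball (0 : E) (c * r))).toReal ^ n)⁻¹ *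
        ∫ x in Set.univ.pi (fun _ => ball (0 : E) (c * r)), f x =
      ((volume (ball (0 : E) r)).toReal ^ n)⁻¹ *
        ∫ y in Set.univ.pi (fun _ => ball (0 : E) r), f (c • y) := by
  rw [Measure.setIntegral_comp_smul_of_pos _ _ _ hc, ← pi_ball_zero_mul_eq_smul hc hr,
    Measure.addHaar_ball_of_pos _ _ (mul_pos hc hr), Measure.addHaar_ball_of_pos _ _ hr,
    Module.finrank_pi_fintype]
  simp only [ENNReal.toReal_mul, ENNReal.toReal_ofReal (pow_nonneg (mul_pos hc hr).le _),
    ENNReal.toReal_ofReal (pow_nonneg hr.le _), Finset.sum_const, Finset.card_univ,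
    Fintype.card_fin, smul_eq_mul]
  ring

theorem integrableOn_logWeight_pi_ball (hd : 1 ≤ Module.finrank ℝ E) (k : Fin n → Fin n → ℕ)
    {r : ℝ} (hr : 0 < r) :
    IntegrableOn (logWeight k) (Set.univ.pi fun _ => ball (0 : E) r) := by
  have h := (integrableOn_pi_ball_mul_iff (mul_pos two_pos hr) one_half_pos).2
    (integrableOn_logWeight_comp_smul
      (integrableOn_logWeight_pi_ball_half volume hd k) (2 * r))
  rwa [show 2 * r * (1 / 2) = r by ring] at h

theorem pi_ball_average_logWeight_mul_le (hd : 1 ≤ Module.finrank ℝ E)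
    (k : Fin n → Fin n → ℕ) {c r : ℝ} (hc : 0 < c) (hr : 0 < r) :
    ((volume (ball (0 : E) (c * r))).toReal ^ n)⁻¹ *
        ∫ x in Set.univ.pi (fun _ => ball (0 : E) (c * r)), logWeight k x ≤
      (1 + |log c|) ^ (∑ i, ∑ j, if i = j then 0 else k i j) *
        (((volume (ball (0 : E) r)).toReal ^ n)⁻¹ *
          ∫ y in Set.univ.pi (fun _ => ball (0 : E) r), logWeight k y) := by
  have hk := integrableOn_logWeight_pi_ball hd k hr
  rw [pi_ball_average_mul _ hc hr, mul_left_comm]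
  refine mul_le_mul_of_nonneg_left ?_ (by positivity)
  rw [← integral_const_mul]
  exact setIntegral_mono_on (integrableOn_logWeight_comp_smul hk c) (hk.const_mul _)
    (MeasurableSet.univ_pi fun _ => measurableSet_ball) fun y _ => logWeight_smul_le k c y

end Scaling

theorem stmt3_general (n : ℕ) (α : Fin n → Fin n → ℕ) :
    ∃ C : ℝ, ∀ lam ∈ Set.Ioc (0 : ℝ) (Real.exp (-1)),
      IntegrableOn
          (fun x : Fin n → EuclideanSpace ℝ (Fin 2) =>
            ∏ i, ∏ j, if i = j then 1 else (1 + |Real.log ‖x i - x j‖|) ^ (2 * α i j))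
          (Set.univ.pi fun _ : Fin n => Metric.ball (0 : EuclideanSpace ℝ (Fin 2)) lam)
          volume ∧
        ((volume (Metric.ball (0 : EuclideanSpace ℝ (Fin 2)) lam)).toReal ^ n)⁻¹ *
            (∫ x in Set.univ.pi fun _ : Fin n => Metric.ball (0 : EuclideanSpace ℝ (Fin 2)) lam,
              ∏ i, ∏ j, if i = j then 1 else (1 + |Real.log ‖x i - x j‖|) ^ (2 * α i j))
          ≤ C * |Real.log lam| ^ (2 * ∑ i, ∑ j, if i = j then 0 else α i j) := by
  have hd : 1 ≤ Module.finrank ℝ (EuclideanSpace ℝ (Fin 2)) := by simp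
  set k : Fin n → Fin n → ℕ := fun i j => 2 * α i j
  set K := 2 * ∑ i, ∑ j, if i = j then 0 else α i j
  have hK : (∑ i, ∑ j, if i = j then 0 else k i j) = K := by
    simp only [k, K, Finset.mul_sum, mul_ite, mul_zero]
  set A := ((volume (ball (0 : EuclideanSpace ℝ (Fin 2)) 1)).toReal ^ n)⁻¹ *
    ∫ y in Set.univ.pi (fun _ => ball (0 : EuclideanSpace ℝ (Fin 2)) 1), logWeight k y
  have hA : 0 ≤ A := mul_nonneg (by positivity)
    (setIntegral_nonneg (MeasurableSet.univ_pi fun _ => measurableSet_ball)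
      fun y _ => logWeight_nonneg k y)
  refine ⟨2 ^ K * A, fun lam ⟨hlam₀, hlam⟩ =>
    ⟨integrableOn_logWeight_pi_ball hd k hlam₀, ?_⟩⟩
  have hlog : 1 + |log lam| ≤ 2 * |log lam| := by
    have : log lam ≤ -1 := (log_le_iff_le_exp hlam₀).mpr hlam
    rw [abs_of_neg (by linarith)]
    linarith
  have h := pi_ball_average_logWeight_mul_le hd k hlam₀ one_pos
  rw [mul_one, hK] at h
  calc _ ≤ _ := h
    _ ≤ (2 * |log lam|) ^ K * A := by gcongr
    _ = 2 ^ K * A * |log lam| ^ K := by ring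

/-- For `n ≥ 1` and nonnegative integers `(α_{ij})_{i≠j}` there is a constant `C`
(depending only on `n` and the `α_{ij}`) such that for every `λ ∈ (0,e⁻¹]` the integrand
`∏_{i≠j}(1+|log|x_i−x_j||)^{2α_{ij}}` is integrable on `B_λⁿ` (so all these integrals are
finite) and its `n`-fold ball average is at most `C |log λ|^{2Σα_{ij}}`. -/
theorem stmt3 (n : ℕ) (hn : 1 ≤ n) (α : Fin n → Fin n → ℕ) :
    ∃ C : ℝ, ∀ lam ∈ Set.Ioc (0 : ℝ) (Real.exp (-1)),
      IntegrableOn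
          (fun x : Fin n → EuclideanSpace ℝ (Fin 2) =>
            ∏ i, ∏ j, if i = j then 1 else (1 + |Real.log ‖x i - x j‖|) ^ (2 * α i j))
          (Set.univ.pi fun _ : Fin n => Metric.ball (0 : EuclideanSpace ℝ (Fin 2)) lam)
          volume ∧
        ((volume (Metric.ball (0 : EuclideanSpace ℝ (Fin 2)) lam)).toReal ^ n)⁻¹ *
            (∫ x in Set.univ.pi fun _ : Fin n => Metric.ball (0 : EuclideanSpace ℝ (Fin 2)) lam,
              ∏ i, ∏ j, if i = j then 1 else (1 + |Real.log ‖x i - x j‖|) ^ (2 * α i j))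
          ≤ C * |Real.log lam| ^ (2 * ∑ i, ∑ j, if i = j then 0 else α i j) :=
  stmt3_general n α
end

section
/- There exists a constant C such that for every λ ∈ (0, e^{-1}] and every x̃ ∈ ℝ² with |x̃| ≤ λ, ⨍_{B_λ} (1 + |log |x − x̃||)² dx ≤ C · |log λ|². -/
/-!
For `0 < r ≤ a ≤ 1` write
`1 + |log r| = (1 - log a) + log (a / r) ≤ (1 - log a) (1 + log (a / r))`;
since `1 + log t ≤ 2 √t` for `t ≥ 1`, this gives `(1 + |log r|)² ≤ 4 (1 - log a)² a / r`.
In dimension `d ≥ 2` the kernel `‖x‖⁻¹` is integrable near the origin, and polar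
coordinates give `∫_{B_a} ‖x‖⁻¹ = d / (d - 1) · |B_1| · a^(d-1)`, hence
`∫_{B_a} (1 + |log ‖x‖|)² ≲ (1 - log a)² |B_a|`.
Finally `B_λ - x̃ ⊆ B_{2λ}`, and `1 - log (2λ) ≤ 2 |log λ|` when `λ ≤ e⁻¹`.
-/

open MeasureTheory Real Metric Set Module

theorem one_add_log_sq_le {t : ℝ} (ht : 1 ≤ t) : (1 + log t) ^ 2 ≤ 4 * t := by
  have hlog_sqrt : log t ≤ 2 * √t - 2 := by
    have := log_le_sub_one_of_pos (sqrt_pos.2 (by linarith : 0 < t))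
    rw [log_sqrt (by linarith)] at this
    linarith
  calc (1 + log t) ^ 2 ≤ (2 * √t) ^ 2 := by
        gcongr
        · linarith [log_nonneg ht]
        · linarith [sqrt_nonneg t]
    _ = 4 * t := by rw [mul_pow, sq_sqrt (by linarith)]; norm_num

theorem one_add_abs_log_sq_le {r a : ℝ} (hr : 0 < r) (hra : r ≤ a) (ha : a ≤ 1) :
    (1 + |log r|) ^ 2 ≤ 4 * (1 - log a) ^ 2 * (a * r⁻¹) := by
  have ht : 1 ≤ a * r⁻¹ := by rw [← div_eq_mul_inv, le_div_iff₀ hr]; linarith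
  have hlog_r : log r = log a - log (a * r⁻¹) := by
    rw [log_mul (by linarith) (by positivity), log_inv]; ring
  have hlog_a : log a ≤ 0 := log_nonpos (by linarith) ha
  have hlog_t : 0 ≤ log (a * r⁻¹) := log_nonneg ht
  have hsplit : 1 + |log r| ≤ (1 - log a) * (1 + log (a * r⁻¹)) := by
    rw [abs_of_nonpos (by linarith), hlog_r]
    nlinarith
  calc (1 + |log r|) ^ 2 ≤ ((1 - log a) * (1 + log (a * r⁻¹))) ^ 2 := by gcongr
    _ = (1 - log a) ^ 2 * (1 + log (a * r⁻¹)) ^ 2 := mul_pow ..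
    _ ≤ (1 - log a) ^ 2 * (4 * (a * r⁻¹)) := by gcongr; exact one_add_log_sq_le ht
    _ = 4 * (1 - log a) ^ 2 * (a * r⁻¹) := by ring

section
variable {E : Type*} [NormedAddCommGroup E] [NormedSpace ℝ E] [FiniteDimensional ℝ E]
  [MeasurableSpace E] [BorelSpace E] (μ : Measure E) [μ.IsAddHaarMeasure]

theorem setIntegral_ball_inv_norm (hd : 2 ≤ finrank ℝ E) {a : ℝ} (ha : 0 ≤ a) :
    ∫ x in ball (0 : E) a, ‖x‖⁻¹ ∂μ =
      finrank ℝ E / (finrank ℝ E - 1 : ℝ) * μ.real (ball 0 1) * a ^ (finrank ℝ E - 1) := by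
  have : Nontrivial E := Module.nontrivial_of_finrank_pos (R := ℝ) (by omega)
  obtain ⟨n, hn⟩ : ∃ n, finrank ℝ E = n + 2 := ⟨finrank ℝ E - 2, by omega⟩
  have hradial : (ball (0 : E) a).indicator (fun x => ‖x‖⁻¹) =
      fun x => (Iio a).indicator (fun r => r⁻¹) ‖x‖ := by
    ext x; simp [indicator]
  have hIoi : ∫ y in Ioi (0 : ℝ), y ^ (n + 1) • (Iio a).indicator (fun r => r⁻¹) y =
      ∫ y in Ioo 0 a, y ^ n := by
    rw [← integral_indicator measurableSet_Ioi, ← integral_indicator measurableSet_Ioo]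
    congr 1; ext y
    by_cases hy : 0 < y
    · by_cases hya : y < a
      · simp [indicator, hy, hya, pow_succ, hy.ne']
      · simp [indicator, hy, hya]
    · simp [indicator, hy]
  rw [← integral_indicator measurableSet_ball, hradial, integral_fun_norm_addHaar, hn,
    show n + 2 - 1 = n + 1 from rfl, hIoi, ← integral_Ioc_eq_integral_Ioo,
    ← intervalIntegral.integral_of_le ha, integral_pow]
  simp only [nsmul_eq_mul, smul_eq_mul, zero_pow n.succ_ne_zero, sub_zero]
  push_cast
  rw [show (n : ℝ) + 2 - 1 = n + 1 by ring]
  ring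

theorem integrableOn_ball_inv_norm (hd : 2 ≤ finrank ℝ E) (a : ℝ) :
    IntegrableOn (fun x : E => ‖x‖⁻¹) (ball 0 a) μ := by
  refine integrableOn_ball_of_norm_le_rpow (α := 1) (C := 1) (by omega) (by exact_mod_cast hd)
    (ae_of_all _ fun x => ?_) (by fun_prop)
  simp [rpow_neg_one]

theorem one_add_abs_log_norm_sq_le_ae (hd : 2 ≤ finrank ℝ E) {a : ℝ} (ha : a ≤ 1) :
    ∀ᵐ x ∂μ.restrict (ball (0 : E) a),
      (1 + |log ‖x‖|) ^ 2 ≤ 4 * (1 - log a) ^ 2 * (a * ‖x‖⁻¹) := by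
  have : Nontrivial E := Module.nontrivial_of_finrank_pos (R := ℝ) (by omega)
  filter_upwards [ae_restrict_mem measurableSet_ball, ae_restrict_of_ae (Measure.ae_ne μ 0)]
    with x hx hx0
  exact one_add_abs_log_sq_le (norm_pos_iff.2 hx0) (mem_ball_zero_iff.1 hx).le ha

theorem integrableOn_ball_one_add_abs_log_norm_sq (hd : 2 ≤ finrank ℝ E) {a : ℝ}
    (ha : a ≤ 1) :
    IntegrableOn (fun x : E => (1 + |log ‖x‖|) ^ 2) (ball 0 a) μ :=
  (((integrableOn_ball_inv_norm μ hd a).const_mul a).const_mul (4 * (1 - log a) ^ 2)).mono'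
    (Measurable.aestronglyMeasurable (by fun_prop)) <|
    (one_add_abs_log_norm_sq_le_ae μ hd ha).mono fun x hx => by
      rwa [norm_of_nonneg (by positivity)]

theorem setIntegral_ball_one_add_abs_log_norm_sq_le (hd : 2 ≤ finrank ℝ E) {a : ℝ}
    (ha0 : 0 ≤ a) (ha1 : a ≤ 1) :
    ∫ x in ball (0 : E) a, (1 + |log ‖x‖|) ^ 2 ∂μ ≤
      4 * (finrank ℝ E / (finrank ℝ E - 1 : ℝ)) * (1 - log a) ^ 2 * μ.real (ball 0 a) := by
  have : Nontrivial E := Module.nontrivial_of_finrank_pos (R := ℝ) (by omega)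
  calc ∫ x in ball (0 : E) a, (1 + |log ‖x‖|) ^ 2 ∂μ
      ≤ ∫ x in ball (0 : E) a, 4 * (1 - log a) ^ 2 * (a * ‖x‖⁻¹) ∂μ :=
        setIntegral_mono_ae_restrict (integrableOn_ball_one_add_abs_log_norm_sq μ hd ha1)
          (((integrableOn_ball_inv_norm μ hd a).const_mul a).const_mul _)
          (one_add_abs_log_norm_sq_le_ae μ hd ha1)
    _ = 4 * (1 - log a) ^ 2 * (a * (finrank ℝ E / (finrank ℝ E - 1 : ℝ) * μ.real (ball 0 1) *
          a ^ (finrank ℝ E - 1))) := by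
        rw [integral_const_mul, integral_const_mul, setIntegral_ball_inv_norm μ hd ha0]
    _ = _ := by
        have hvol : μ.real (ball 0 a) = a ^ finrank ℝ E * μ.real (ball 0 1) := by
          simp only [measureReal_def, Measure.addHaar_ball μ 0 ha0, ENNReal.toReal_mul,
            ENNReal.toReal_ofReal (by positivity : 0 ≤ a ^ finrank ℝ E)]
        rw [hvol, ← mul_assoc a, mul_comm a, mul_assoc _ a, ← pow_succ',
          Nat.sub_add_cancel (by omega : 1 ≤ finrank ℝ E)]
        ring

theorem setIntegral_ball_one_add_abs_log_norm_sub_sq_le (hd : 2 ≤ finrank ℝ E) {c : E} {r : ℝ}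
    (hc : ‖c‖ ≤ r) (hr1 : 2 * r ≤ 1) :
    ∫ x in ball (0 : E) r, (1 + |log ‖x - c‖|) ^ 2 ∂μ ≤
      2 ^ finrank ℝ E * 4 * (finrank ℝ E / (finrank ℝ E - 1 : ℝ)) * (1 - log (2 * r)) ^ 2 *
        μ.real (ball 0 r) := by
  have : Nontrivial E := Module.nontrivial_of_finrank_pos (R := ℝ) (by omega)
  have hpreimage : (fun x => x - c) ⁻¹' ball (-c) r = ball 0 r := by
    ext x; simp [dist_eq_norm]
  have hsubset : ball (-c) r ⊆ ball (0 : E) (2 * r) := by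
    intro y hy
    rw [mem_ball, dist_eq_norm, sub_neg_eq_add] at hy
    rw [mem_ball_zero_iff]
    calc ‖y‖ = ‖(y + c) - c‖ := by rw [add_sub_cancel_right]
      _ ≤ ‖y + c‖ + ‖c‖ := norm_sub_le _ _
      _ < 2 * r := by linarith
  have hvol : μ.real (ball 0 (2 * r)) = 2 ^ finrank ℝ E * μ.real (ball 0 r) := by
    simp only [measureReal_def, Measure.addHaar_ball_mul μ 0 zero_le_two, ENNReal.toReal_mul,
      ENNReal.toReal_ofReal (by positivity : (0 : ℝ) ≤ 2 ^ finrank ℝ E)]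
  calc ∫ x in ball (0 : E) r, (1 + |log ‖x - c‖|) ^ 2 ∂μ
      = ∫ y in ball (-c) r, (1 + |log ‖y‖|) ^ 2 ∂μ := by
        rw [← hpreimage]
        exact (measurePreserving_sub_right μ c).setIntegral_preimage_emb
          (measurableEmbedding_subRight c) (fun y => (1 + |log ‖y‖|) ^ 2) _
    _ ≤ ∫ y in ball (0 : E) (2 * r), (1 + |log ‖y‖|) ^ 2 ∂μ :=
        setIntegral_mono_set (integrableOn_ball_one_add_abs_log_norm_sq μ hd hr1)
          (ae_of_all _ fun _ => by positivity) hsubset.eventuallyLE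
    _ ≤ 4 * (finrank ℝ E / (finrank ℝ E - 1 : ℝ)) * (1 - log (2 * r)) ^ 2 *
          μ.real (ball 0 (2 * r)) :=
        setIntegral_ball_one_add_abs_log_norm_sq_le μ hd (by linarith [norm_nonneg c]) hr1
    _ = _ := by rw [hvol]; ring
end

/-- There is a constant `C` such that for every `λ ∈ (0,e⁻¹]` and every `x̃ ∈ ℝ²` with
`|x̃| ≤ λ`, the ball average `⨍_{B_λ} (1+|log|x−x̃||)² dx` is at most `C |log λ|²`. -/
theorem stmt4 :
    ∃ C : ℝ, ∀ lam ∈ Set.Ioc (0 : ℝ) (Real.exp (-1)),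
      ∀ xt : EuclideanSpace ℝ (Fin 2), ‖xt‖ ≤ lam →
        ((volume (Metric.ball (0 : EuclideanSpace ℝ (Fin 2)) lam)).toReal)⁻¹ *
            (∫ x in Metric.ball (0 : EuclideanSpace ℝ (Fin 2)) lam,
              (1 + |Real.log ‖x - xt‖|) ^ 2)
          ≤ C * |Real.log lam| ^ 2 := by
  refine ⟨128, ?_⟩
  rintro lam ⟨hlam0, hlam⟩ xt hxt
  have hlog_lam : log lam ≤ -1 := (log_le_iff_le_exp hlam0).2 hlam
  have h2lam : 2 * lam ≤ 1 := by
    have : exp (-1) ≤ 1 / 2 := by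
      rw [exp_neg, one_div]
      exact inv_anti₀ two_pos (by linarith [add_one_le_exp 1])
    linarith
  have hlog_two_lam : 1 - log (2 * lam) ≤ 2 * |log lam| := by
    rw [log_mul two_ne_zero hlam0.ne', abs_of_neg (by linarith)]
    linarith [log_pos one_lt_two]
  have hvol : 0 < volume.real (ball (0 : EuclideanSpace ℝ (Fin 2)) lam) :=
    ENNReal.toReal_pos (measure_ball_pos _ _ hlam0).ne' measure_ball_lt_top.ne
  have hbound := setIntegral_ball_one_add_abs_log_norm_sub_sq_le volume (by simp) hxt h2lam
  norm_num [finrank_euclideanSpace_fin] at hbound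
  rw [← measureReal_def, inv_mul_le_iff₀ hvol]
  calc _ ≤ 32 * (1 - log (2 * lam)) ^ 2 *
          volume.real (ball (0 : EuclideanSpace ℝ (Fin 2)) lam) := by linarith
    _ ≤ 32 * (2 * |log lam|) ^ 2 *
          volume.real (ball (0 : EuclideanSpace ℝ (Fin 2)) lam) := by
        gcongr
        linarith [log_nonpos (by positivity) h2lam]
    _ = _ := by ring
end

section
/- Let H be a separable real Hilbert space with Hilbert (orthonormal) basis (e_j)_{j ∈ ℕ}, let S : H → H be a bounded linear operator with M := Σ_j ‖S e_j‖² < ∞, let n ≥ 1, and let B : H × ⋯ × H → ℝ (n factors) be an n-multilinear map such that for some C ≥ 0, |B(x₁, …, xₙ)| ≤ C ∏_{i=1}^n ‖S x_i‖ for all x₁, …, xₙ ∈ H. Then Σ_{j₁, …, jₙ ∈ ℕ} |B(e_{j₁}, …, e_{jₙ})|² ≤ C² Mⁿ, and for all T₁, …, Tₙ ∈ H the absolutely convergent expansion B(T₁, …, Tₙ) = Σ_{j₁, …, jₙ ∈ ℕ} B(e_{j₁}, …, e_{jₙ}) ∏_{i=1}^n ⟨T_i, e_{j_i}⟩ holds.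 -/
/-!
Squaring the domination hypothesis at basis vectors bounds `|B(e_{j₁},…,e_{jₙ})|²` by
`C² ∏ ‖S e_{jᵢ}‖²`, and a product of nonnegative summable families is summable over `ℕⁿ` with sum
the product of the sums; this gives `C² Mⁿ`. By AM-GM, `k ↦ ‖S e_k‖ |⟪T, e_k⟫|` is summable, so the
same product rule makes the expansion absolutely convergent. Its sum is the limit of the partial
sums over the boxes `sⁿ`, which by multilinearity are `B` applied to the partial sums of the basis
expansions of the `Tᵢ`; these tend to `B T` since `B` is bounded by a multiple of `∏ ‖xᵢ‖`,
hence continuous.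
-/

open scoped RealInnerProductSpace

open Filter Topology Finset

theorem tendsto_piFinset_const_atTop {ι β : Type*} [Fintype ι] [DecidableEq ι] :
    Tendsto (fun s : Finset β => Fintype.piFinset fun _ : ι => s) atTop atTop := by
  classical
  refine tendsto_atTop_atTop_of_monotone (fun s t hst => Fintype.piFinset_subset _ _ fun _ => hst)
    fun u => ⟨u.biUnion fun j => univ.image j, fun j hj => ?_⟩
  simp only [Fintype.mem_piFinset, mem_biUnion, mem_image]
  exact fun i => ⟨j, hj, i, mem_univ i, rfl⟩

theorem Summable.hasSum_of_tendsto_sum_piFinset_const {ι β α : Type*} [Fintype ι] [DecidableEq ι]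
    [AddCommMonoid α] [TopologicalSpace α] [T2Space α] {f : (ι → β) → α} {a : α}
    (hf : Summable f)
    (h : Tendsto (fun s : Finset β => ∑ j ∈ Fintype.piFinset fun _ => s, f j) atTop (𝓝 a)) :
    HasSum f a := by
  obtain ⟨b, hb⟩ := hf
  rwa [tendsto_nhds_unique (hb.comp tendsto_piFinset_const_atTop) h] at hb

theorem hasSum_prod_apply_of_nonneg {ι β : Type*} [Fintype ι] {f : ι → β → ℝ} {a : ι → ℝ}
    (hf : ∀ i k, 0 ≤ f i k) (ha : ∀ i, HasSum (f i) (a i)) :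
    HasSum (fun j : ι → β => ∏ i, f i (j i)) (∏ i, a i) := by
  classical
  have hbox : ∀ s : Finset β, ∑ j ∈ Fintype.piFinset (fun _ => s), ∏ i, f i (j i)
      = ∏ i, ∑ k ∈ s, f i k := fun s => (prod_univ_sum _ _).symm
  have hsummable : Summable fun j : ι → β => ∏ i, f i (j i) := by
    refine summable_of_sum_le (c := ∏ i, a i) (fun j => prod_nonneg fun i _ => hf i _) fun u => ?_
    obtain ⟨s, hs⟩ := (tendsto_piFinset_const_atTop.eventually (eventually_ge_atTop u)).exists
    calc ∑ j ∈ u, ∏ i, f i (j i)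
        ≤ ∑ j ∈ Fintype.piFinset (fun _ => s), ∏ i, f i (j i) :=
          sum_le_sum_of_subset_of_nonneg hs fun j _ _ => prod_nonneg fun i _ => hf i _
      _ = ∏ i, ∑ k ∈ s, f i k := hbox s
      _ ≤ ∏ i, a i := prod_le_prod (fun i _ => sum_nonneg fun k _ => hf i k)
          fun i _ => sum_le_hasSum s (fun k _ => hf i k) (ha i)
  refine hsummable.hasSum_of_tendsto_sum_piFinset_const ?_
  simp_rw [hbox]
  exact tendsto_finsetProd _ fun i _ => ha i

theorem summable_abs_mul_of_summable_sq {ι : Type*} {f g : ι → ℝ}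
    (hf : Summable fun k => f k ^ 2) (hg : Summable fun k => g k ^ 2) :
    Summable fun k => |f k * g k| := by
  refine .of_nonneg_of_le (fun _ => abs_nonneg _) (fun k => ?_) ((hf.add hg).div_const 2)
  have := two_mul_le_add_sq |f k| |g k|
  rw [sq_abs, sq_abs] at this
  rw [abs_mul]
  linarith

namespace MultilinearMap

theorem continuous_of_norm_le_mul_prod_norm_comp {𝕜 ι E F G : Type*} [NontriviallyNormedField 𝕜]
    [Fintype ι] [SeminormedAddCommGroup E] [NormedSpace 𝕜 E] [SeminormedAddCommGroup F]
    [NormedSpace 𝕜 F] [SeminormedAddCommGroup G] [NormedSpace 𝕜 G]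
    (B : MultilinearMap 𝕜 (fun _ : ι => E) G) (S : E →L[𝕜] F) (C : ℝ)
    (hB : ∀ x, ‖B x‖ ≤ C * ∏ i, ‖S (x i)‖) : Continuous B := by
  refine B.continuous_of_bound (max C 0 * ‖S‖ ^ Fintype.card ι) fun x => ?_
  have hprod : ∏ i, ‖S (x i)‖ ≤ ‖S‖ ^ Fintype.card ι * ∏ i, ‖x i‖ := by
    rw [← card_univ, ← prod_const, ← prod_mul_distrib]
    exact prod_le_prod (fun i _ => norm_nonneg _) fun i _ => S.le_opNorm _
  calc ‖B x‖ ≤ C * ∏ i, ‖S (x i)‖ := hB x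
    _ ≤ max C 0 * ∏ i, ‖S (x i)‖ :=
      mul_le_mul_of_nonneg_right (le_max_left _ _) (prod_nonneg fun i _ => norm_nonneg _)
    _ ≤ max C 0 * (‖S‖ ^ Fintype.card ι * ∏ i, ‖x i‖) :=
      mul_le_mul_of_nonneg_left hprod (le_max_right _ _)
    _ = _ := (mul_assoc _ _ _).symm

theorem hasSum_apply_of_summable {R ι β M₂ : Type*} {M₁ : ι → Type*} [Semiring R] [Fintype ι]
    [DecidableEq ι] [∀ i, AddCommMonoid (M₁ i)] [∀ i, Module R (M₁ i)]
    [∀ i, TopologicalSpace (M₁ i)] [∀ i, ContinuousAdd (M₁ i)] [AddCommMonoid M₂] [Module R M₂]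
    [TopologicalSpace M₂] [T2Space M₂] (f : MultilinearMap R M₁ M₂) (hf : Continuous f)
    {v : ∀ i, β → M₁ i} {x : ∀ i, M₁ i} (hv : ∀ i, HasSum (v i) (x i))
    (hs : Summable fun j : ι → β => f fun i => v i (j i)) :
    HasSum (fun j : ι → β => f fun i => v i (j i)) (f x) := by
  refine hs.hasSum_of_tendsto_sum_piFinset_const ?_
  simp_rw [← f.map_sum_finset]
  exact (hf.tendsto x).comp (tendsto_pi_nhds.mpr hv)

end MultilinearMap

namespace HilbertBasis

variable {ι E : Type*} [NormedAddCommGroup E] [InnerProductSpace ℝ E] (b : HilbertBasis ι ℝ E)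

theorem hasSum_inner_smul (x : E) : HasSum (fun i => ⟪x, b i⟫ • b i) x := by
  simpa only [b.repr_apply_apply, real_inner_comm] using b.hasSum_repr x

theorem summable_inner_sq (x : E) : Summable fun i => ⟪x, b i⟫ ^ 2 := by
  simpa only [sq, real_inner_comm x] using b.summable_inner_mul_inner x x

end HilbertBasis

theorem MultilinearMap.hasSum_apply_hilbertBasis {ι κ E : Type*} [Fintype ι]
    [NormedAddCommGroup E] [InnerProductSpace ℝ E] (B : MultilinearMap ℝ (fun _ : ι => E) ℝ)
    (hB : Continuous B) (e : HilbertBasis κ ℝ E) (T : ι → E)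
    (hs : Summable fun j : ι → κ => (B fun i => e (j i)) * ∏ i, ⟪T i, e (j i)⟫) :
    HasSum (fun j : ι → κ => (B fun i => e (j i)) * ∏ i, ⟪T i, e (j i)⟫) (B T) := by
  classical
  have hterm : (fun j : ι → κ => B fun i => ⟪T i, e (j i)⟫ • e (j i))
      = fun j => (B fun i => e (j i)) * ∏ i, ⟪T i, e (j i)⟫ :=
    funext fun j => by rw [B.map_smul_univ, smul_eq_mul, mul_comm]
  rw [← hterm] at hs ⊢
  exact B.hasSum_apply_of_summable hB (v := fun i k => ⟪T i, e k⟫ • e k)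
    (fun i => e.hasSum_inner_smul (T i)) hs

theorem stmt15_general {H : Type*} [NormedAddCommGroup H] [InnerProductSpace ℝ H]
    (e : HilbertBasis ℕ ℝ H) (S : H →L[ℝ] H) (M : ℝ)
    (hM : HasSum (fun j : ℕ => ‖S (e j)‖ ^ 2) M)
    (n : ℕ) (B : MultilinearMap ℝ (fun _ : Fin n => H) ℝ)
    (C : ℝ)
    (hB : ∀ x : Fin n → H, |B x| ≤ C * ∏ i, ‖S (x i)‖) :
    Summable (fun j : Fin n → ℕ => |B fun i => e (j i)| ^ 2) ∧
      (∑' j : Fin n → ℕ, |B fun i => e (j i)| ^ 2) ≤ C ^ 2 * M ^ n ∧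
      ∀ T : Fin n → H,
        Summable (fun j : Fin n → ℕ => |(B fun i => e (j i)) * ∏ i, ⟪T i, e (j i)⟫|) ∧
          HasSum (fun j : Fin n → ℕ => (B fun i => e (j i)) * ∏ i, ⟪T i, e (j i)⟫) (B T) := by
  have hM_pow : HasSum (fun j : Fin n → ℕ => ∏ i, ‖S (e (j i))‖ ^ 2) (M ^ n) := by
    simpa using hasSum_prod_apply_of_nonneg (fun _ k => sq_nonneg ‖S (e k)‖) fun _ : Fin n => hM
  have hle : ∀ j : Fin n → ℕ, |B fun i => e (j i)| ^ 2 ≤ C ^ 2 * ∏ i, ‖S (e (j i))‖ ^ 2 :=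
    fun j => by
      rw [prod_pow, ← mul_pow]
      exact pow_le_pow_left₀ (abs_nonneg _) (hB _) 2
  have hsq : Summable fun j : Fin n → ℕ => |B fun i => e (j i)| ^ 2 :=
    .of_nonneg_of_le (fun _ => sq_nonneg _) hle (hM_pow.summable.mul_left _)
  refine ⟨hsq, ?_, fun T => ?_⟩
  · calc ∑' j : Fin n → ℕ, |B fun i => e (j i)| ^ 2
        ≤ ∑' j : Fin n → ℕ, C ^ 2 * ∏ i, ‖S (e (j i))‖ ^ 2 :=
          hsq.tsum_le_tsum hle (hM_pow.summable.mul_left _)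
      _ = C ^ 2 * M ^ n := by rw [tsum_mul_left, hM_pow.tsum_eq]
  have hdom : ∀ j : Fin n → ℕ, |(B fun i => e (j i)) * ∏ i, ⟪T i, e (j i)⟫|
      ≤ C * ∏ i, |‖S (e (j i))‖ * ⟪T i, e (j i)⟫| := fun j => by
    rw [abs_mul, abs_prod]
    simp_rw [abs_mul, abs_norm, prod_mul_distrib, ← mul_assoc]
    exact mul_le_mul_of_nonneg_right (hB _) (prod_nonneg fun i _ => abs_nonneg _)
  have hprod : Summable fun j : Fin n → ℕ => ∏ i, |‖S (e (j i))‖ * ⟪T i, e (j i)⟫| :=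
    (hasSum_prod_apply_of_nonneg (fun _ _ => abs_nonneg _) fun i =>
      (summable_abs_mul_of_summable_sq hM.summable (e.summable_inner_sq (T i))).hasSum).summable
  have habs := Summable.of_nonneg_of_le (fun _ => abs_nonneg _) hdom (hprod.mul_left C)
  exact ⟨habs, B.hasSum_apply_hilbertBasis (B.continuous_of_norm_le_mul_prod_norm_comp S C hB) e T
    (summable_abs_iff.mp habs)⟩

/-- Expansion of an `n`-multilinear map dominated by a Hilbert–Schmidt type operator:
if `S : H → H` is bounded with `M = Σ_j ‖S e_j‖² < ∞` and
`|B(x₁,…,xₙ)| ≤ C ∏ᵢ ‖S xᵢ‖`, then `Σ_{j₁,…,jₙ} |B(e_{j₁},…,e_{jₙ})|² ≤ C² Mⁿ`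
(and this sum converges), and for all `T₁,…,Tₙ ∈ H` the absolutely convergent expansion
`B(T₁,…,Tₙ) = Σ_{j₁,…,jₙ} B(e_{j₁},…,e_{jₙ}) ∏ᵢ ⟨Tᵢ, e_{jᵢ}⟩` holds. -/
theorem stmt15 {H : Type*} [NormedAddCommGroup H] [InnerProductSpace ℝ H] [CompleteSpace H]
    (e : HilbertBasis ℕ ℝ H) (S : H →L[ℝ] H) (M : ℝ)
    (hM : HasSum (fun j : ℕ => ‖S (e j)‖ ^ 2) M)
    (n : ℕ) (hn : 1 ≤ n) (B : MultilinearMap ℝ (fun _ : Fin n => H) ℝ)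
    (C : ℝ) (hC : 0 ≤ C)
    (hB : ∀ x : Fin n → H, |B x| ≤ C * ∏ i, ‖S (x i)‖) :
    Summable (fun j : Fin n → ℕ => |B fun i => e (j i)| ^ 2) ∧
      (∑' j : Fin n → ℕ, |B fun i => e (j i)| ^ 2) ≤ C ^ 2 * M ^ n ∧
      ∀ T : Fin n → H,
        Summable (fun j : Fin n → ℕ => |(B fun i => e (j i)) * ∏ i, ⟪T i, e (j i)⟫|) ∧
          HasSum (fun j : Fin n → ℕ => (B fun i => e (j i)) * ∏ i, ⟪T i, e (j i)⟫) (B T) :=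
  stmt15_general e S M hM n B C hB
end
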